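/- Let α be an inclusion assertion (positive or negative, concept or role) or a functionality assertion, and let I1, I2 be interpretations with disjoint support sets. Then I1 ⊎ I2 ⊨ α if and only if I1 ⊨ α and I2 ⊨ α. -/

import Mathlib

namespace DLLite

/-- The countably infinite domain of constants. -/
abbrev Δ : Type := ℕ
/-- Countably infinite set of concept names. -/
abbrev ConceptName : Type := ℕ
/-- Countably infinite set of role names. -/
abbrev RoleName : Type := ℕ

/-- An interpretation assigns a set of domain elements to each concept name
and a binary relation to each role name; constants are interpreted as themselves. -/
structure Interp where
  concept : ConceptName → Set Δ
  role : RoleName → Set (Δ × Δ)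

/-- Basic roles: `P` or `P⁻`. -/
inductive BasicRole where
  | pos (P : RoleName)
  | inv (P : RoleName)
deriving DecidableEq

def BasicRole.interp (R : BasicRole) (I : Interp) : Set (Δ × Δ) :=
  match R with
  | .pos P => I.role P
  | .inv P => {p | (p.2, p.1) ∈ I.role P}

/-- Basic concepts: `A` or `∃R`. -/
inductive BasicConcept where
  | atom (A : ConceptName)
  | ex (R : BasicRole)
deriving DecidableEq

def BasicConcept.interp (B : BasicConcept) (I : Interp) : Set Δ :=
  match B with
  | .atom A => I.concept A
  | .ex R => {o | ∃ o', (o, o') ∈ R.interp I}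

/-- DL-Lite_FR assertions: (negative) concept/role inclusions, functionality
assertions, and membership assertions. -/
inductive Assertion where
  | conceptIncl (B1 B2 : BasicConcept)
  | conceptDisj (B1 B2 : BasicConcept)
  | roleIncl (R1 R2 : BasicRole)
  | roleDisj (R1 R2 : BasicRole)
  | funct (R : BasicRole)
  | memberC (A : ConceptName) (a : Δ)
  | memberR (P : RoleName) (a b : Δ)
deriving DecidableEq

/-- Satisfaction of an assertion by an interpretation. -/
def Interp.sat (I : Interp) : Assertion → Prop
  | .conceptIncl B1 B2 => B1.interp I ⊆ B2.interp I
  | .conceptDisj B1 B2 => B1.interp I ∩ B2.interp I = ∅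
  | .roleIncl R1 R2 => R1.interp I ⊆ R2.interp I
  | .roleDisj R1 R2 => R1.interp I ∩ R2.interp I = ∅
  | .funct R => ∀ o o1 o2, (o, o1) ∈ R.interp I → (o, o2) ∈ R.interp I → o1 = o2
  | .memberC A a => a ∈ I.concept A
  | .memberR P a b => (a, b) ∈ I.role P

/-- TBox assertions: inclusion or functionality assertions. -/
def Assertion.isTBox : Assertion → Prop
  | .memberC _ _ => False
  | .memberR _ _ _ => False
  | _ => True

/-- Membership (ABox) assertions. -/
def Assertion.isMembership : Assertion → Prop
  | .memberC _ _ => True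
  | .memberR _ _ _ => True
  | _ => False

/-- The constants occurring in an assertion. -/
def Assertion.constants : Assertion → Set Δ
  | .memberC _ a => {a}
  | .memberR _ a b => {a, b}
  | _ => ∅

/-- A knowledge base: a finite set of assertions (TBox ∪ ABox). -/
abbrev KB := Finset Assertion

/-- The set of models of a KB. -/
def Mod (K : KB) : Set Interp := {I | ∀ a ∈ K, I.sat a}

/-- Interpretations falsifying at least one assertion of `K`. -/
def NonMod (K : KB) : Set Interp := {I | ∃ a ∈ K, ¬ I.sat a}

/-- The constants occurring in a KB. -/
def KB.constants (K : KB) : Set Δ := ⋃ a ∈ K, Assertion.constants a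

/-- Atoms: ground facts `A(o)` or `P(o,o')`. -/
inductive Atom where
  | c (A : ConceptName) (o : Δ)
  | r (P : RoleName) (o o' : Δ)
deriving DecidableEq

/-- The atom set of an interpretation. -/
def Interp.atoms (I : Interp) : Set Atom :=
  fun a => match a with
  | .c A o => o ∈ I.concept A
  | .r P o o' => (o, o') ∈ I.role P

/-- Concept or role names (symbols). -/
inductive SName where
  | c (A : ConceptName)
  | r (P : RoleName)
deriving DecidableEq

/-- Atom-based set distance: symmetric difference of atom sets. -/
def distASub (I J : Interp) : Set Atom := symmDiff I.atoms J.atoms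
/-- Atom-based cardinality distance. -/
noncomputable def distACard (I J : Interp) : ℕ∞ := (symmDiff I.atoms J.atoms).encard
/-- Symbol-based set distance: names interpreted differently. -/
def distSSub (I J : Interp) : Set SName :=
  fun n => match n with
  | .c A => I.concept A ≠ J.concept A
  | .r P => I.role P ≠ J.role P
/-- Symbol-based cardinality distance. -/
noncomputable def distSCard (I J : Interp) : ℕ∞ := (distSSub I J).encard

/-- Global expansion w.r.t. a distance. -/
def expGlobD {D : Type} [PartialOrder D] (dist : Interp → Interp → D)
    (M N : Set Interp) : Set Interp :=
  {J | J ∈ N ∧ ∃ I ∈ M, ∀ I' ∈ M, ∀ J' ∈ N, ¬ dist I' J' < dist I J}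

/-- Local expansion w.r.t. a distance. -/
def expLocD {D : Type} [PartialOrder D] (dist : Interp → Interp → D)
    (M N : Set Interp) : Set Interp :=
  {J | J ∈ N ∧ ∃ I ∈ M, ∀ J' ∈ N, ¬ dist I J' < dist I J}

inductive LocKind | glob | loc
inductive MeasKind | atoms | symbols
inductive OrdKind | subset | card

/-- The expansion operator on sets of interpretations for each of the
eight model-based semantics `X^y_z`. -/
def expansionSet : LocKind → MeasKind → OrdKind → Set Interp → Set Interp → Set Interp
  | .glob, .atoms, .subset => expGlobD distASub
  | .glob, .atoms, .card => expGlobD distACard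
  | .glob, .symbols, .subset => expGlobD distSSub
  | .glob, .symbols, .card => expGlobD distSCard
  | .loc, .atoms, .subset => expLocD distASub
  | .loc, .atoms, .card => expLocD distACard
  | .loc, .symbols, .subset => expLocD distSSub
  | .loc, .symbols, .card => expLocD distSCard

/-- KB expansion `K ⊕ N` under semantics `X^y_z`. -/
def expandKB (X : LocKind) (y : MeasKind) (z : OrdKind) (K N : KB) : Set Interp :=
  expansionSet X y z (Mod K) (Mod N)

/-- KB contraction `K ⊖ N` under semantics `X^y_z`. -/
def contractKB (X : LocKind) (y : MeasKind) (z : OrdKind) (K N : KB) : Set Interp :=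
  Mod K ∪ expansionSet X y z (Mod K) (NonMod N)

/-- Union of two interpretations. -/
def Interp.union (I1 I2 : Interp) : Interp :=
  ⟨fun A => I1.concept A ∪ I2.concept A, fun P => I1.role P ∪ I2.role P⟩

/-- The support set of an interpretation. -/
def Interp.support (I : Interp) : Set Δ :=
  (⋃ A, I.concept A) ∪ (⋃ P, {o | ∃ o', (o, o') ∈ I.role P ∨ (o', o) ∈ I.role P})

/-- The image `I^f` of an interpretation under an (injective) map `f`. -/
def Interp.image (I : Interp) (f : Δ → Δ) : Interp :=
  ⟨fun A => f '' I.concept A, fun P => (fun p => (f p.1, f p.2)) '' I.role P⟩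

/-- `h` is a homomorphism from `I` to `J`. -/
def IsHom (h : Δ → Δ) (I J : Interp) : Prop :=
  (∀ A, h '' I.concept A ⊆ J.concept A) ∧
  (∀ P o o', (o, o') ∈ I.role P → (h o, h o') ∈ J.role P)

end DLLite

/-!
Every basic concept (resp. basic role) of an interpretation is interpreted inside its support
(resp. the square of its support), and the union interprets each of them as the union of the two
interpretations. With disjoint supports, the parts coming from `I1` and from `I2` can never meet:
an inclusion or disjointness assertion compares the same element or pair on both sides, and a
functionality assertion compares pairs with the same first component. So each assertion
splits into its two halves.
-/

namespace Set

variable {α β : Type*}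

theorem union_subset_union_iff_of_disjoint {s₁ s₂ t₁ t₂ : Set α}
    (h₁ : Disjoint s₁ t₂) (h₂ : Disjoint s₂ t₁) :
    s₁ ∪ s₂ ⊆ t₁ ∪ t₂ ↔ s₁ ⊆ t₁ ∧ s₂ ⊆ t₂ := by
  refine ⟨fun h => ⟨?_, ?_⟩, fun h => union_subset_union h.1 h.2⟩
  · exact h₁.subset_left_of_subset_union (subset_union_left.trans h)
  · exact h₂.subset_right_of_subset_union (subset_union_right.trans h)

theorem union_inter_union_eq_empty_iff_of_disjoint {s₁ s₂ t₁ t₂ : Set α}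
    (h₁ : Disjoint s₁ t₂) (h₂ : Disjoint s₂ t₁) :
    (s₁ ∪ s₂) ∩ (t₁ ∪ t₂) = ∅ ↔ s₁ ∩ t₁ = ∅ ∧ s₂ ∩ t₂ = ∅ := by
  simp only [← disjoint_iff_inter_eq_empty, disjoint_union_left, disjoint_union_right, h₁, h₂,
    and_true, true_and]

theorem functional_union_iff {r₁ r₂ : Set (α × β)}
    (h : Disjoint (Prod.fst '' r₁) (Prod.fst '' r₂)) :
    (∀ a b₁ b₂, (a, b₁) ∈ r₁ ∪ r₂ → (a, b₂) ∈ r₁ ∪ r₂ → b₁ = b₂) ↔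
      (∀ a b₁ b₂, (a, b₁) ∈ r₁ → (a, b₂) ∈ r₁ → b₁ = b₂) ∧
      (∀ a b₁ b₂, (a, b₁) ∈ r₂ → (a, b₂) ∈ r₂ → b₁ = b₂) := by
  have cross : ∀ a b₁ b₂, (a, b₁) ∈ r₁ → (a, b₂) ∈ r₂ → False := fun a b₁ b₂ h₁ h₂ =>
    h.ne_of_mem (mem_image_of_mem Prod.fst h₁) (mem_image_of_mem Prod.fst h₂) rfl
  refine ⟨fun hf => ⟨fun a b₁ b₂ h₁ h₂ => hf a b₁ b₂ (.inl h₁) (.inl h₂),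
    fun a b₁ b₂ h₁ h₂ => hf a b₁ b₂ (.inr h₁) (.inr h₂)⟩, ?_⟩
  rintro ⟨hf₁, hf₂⟩ a b₁ b₂ (h₁ | h₁) (h₂ | h₂)
  · exact hf₁ a b₁ b₂ h₁ h₂
  · exact (cross a b₁ b₂ h₁ h₂).elim
  · exact (cross a b₂ b₁ h₂ h₁).elim
  · exact hf₂ a b₁ b₂ h₁ h₂

end Set

namespace DLLite

theorem Interp.role_subset_support (I : Interp) (P : RoleName) :
    I.role P ⊆ I.support ×ˢ I.support := fun p hp =>
  ⟨.inr (Set.mem_iUnion.2 ⟨P, p.2, .inl hp⟩), .inr (Set.mem_iUnion.2 ⟨P, p.1, .inr hp⟩)⟩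

theorem BasicRole.interp_subset_support (R : BasicRole) (I : Interp) :
    R.interp I ⊆ I.support ×ˢ I.support := by
  cases R with
  | pos P => exact I.role_subset_support P
  | inv P => exact fun p hp => (I.role_subset_support P hp).symm

theorem BasicRole.interp_union (R : BasicRole) (I₁ I₂ : Interp) :
    R.interp (I₁.union I₂) = R.interp I₁ ∪ R.interp I₂ := by
  cases R <;> rfl

theorem BasicConcept.interp_subset_support (B : BasicConcept) (I : Interp) :
    B.interp I ⊆ I.support := by
  cases B with
  | atom A => exact fun o ho => .inl (Set.mem_iUnion.2 ⟨A, ho⟩)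
  | ex R => exact fun o ⟨o', h⟩ => (R.interp_subset_support I h).1

theorem BasicConcept.interp_union (B : BasicConcept) (I₁ I₂ : Interp) :
    B.interp (I₁.union I₂) = B.interp I₁ ∪ B.interp I₂ := by
  cases B with
  | atom A => rfl
  | ex R =>
    ext o
    simp only [BasicConcept.interp, R.interp_union, Set.mem_union, Set.mem_ofPred_eq, exists_or]

theorem BasicConcept.disjoint_interp {I₁ I₂ : Interp} (hdisj : Disjoint I₁.support I₂.support)
    (B B' : BasicConcept) : Disjoint (B.interp I₁) (B'.interp I₂) :=
  hdisj.mono (B.interp_subset_support I₁) (B'.interp_subset_support I₂)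

theorem BasicRole.disjoint_interp {I₁ I₂ : Interp} (hdisj : Disjoint I₁.support I₂.support)
    (R R' : BasicRole) : Disjoint (R.interp I₁) (R'.interp I₂) :=
  (Set.disjoint_prod.2 (.inl hdisj)).mono (R.interp_subset_support I₁)
    (R'.interp_subset_support I₂)

theorem BasicRole.disjoint_image_fst_interp {I₁ I₂ : Interp}
    (hdisj : Disjoint I₁.support I₂.support) (R R' : BasicRole) :
    Disjoint (Prod.fst '' R.interp I₁) (Prod.fst '' R'.interp I₂) :=
  hdisj.mono (Set.image_subset_iff.2 fun _ hp => (R.interp_subset_support I₁ hp).1)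
    (Set.image_subset_iff.2 fun _ hp => (R'.interp_subset_support I₂ hp).1)

/-- For an inclusion or functionality assertion `α` and interpretations with
disjoint support sets: `I1 ⊎ I2 ⊨ α` iff `I1 ⊨ α` and `I2 ⊨ α`. -/
theorem disjoint_union_sat_tbox (α : Assertion) (hα : α.isTBox)
    (I1 I2 : Interp) (hdisj : Disjoint I1.support I2.support) :
    (I1.union I2).sat α ↔ I1.sat α ∧ I2.sat α := by
  have hdisj' := hdisj.symm
  cases α with
  | conceptIncl B1 B2 =>
    simpa only [Interp.sat, BasicConcept.interp_union] using
      Set.union_subset_union_iff_of_disjoint (B1.disjoint_interp hdisj B2)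
        (B1.disjoint_interp hdisj' B2)
  | conceptDisj B1 B2 =>
    simpa only [Interp.sat, BasicConcept.interp_union] using
      Set.union_inter_union_eq_empty_iff_of_disjoint (B1.disjoint_interp hdisj B2)
        (B1.disjoint_interp hdisj' B2)
  | roleIncl R1 R2 =>
    simpa only [Interp.sat, BasicRole.interp_union] using
      Set.union_subset_union_iff_of_disjoint (R1.disjoint_interp hdisj R2)
        (R1.disjoint_interp hdisj' R2)
  | roleDisj R1 R2 =>
    simpa only [Interp.sat, BasicRole.interp_union] using
      Set.union_inter_union_eq_empty_iff_of_disjoint (R1.disjoint_interp hdisj R2)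
        (R1.disjoint_interp hdisj' R2)
  | funct R =>
    simpa only [Interp.sat, BasicRole.interp_union] using
      Set.functional_union_iff (R.disjoint_image_fst_interp hdisj R)
  | memberC | memberR => exact hα.elim

end DLLite
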